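/- arXiv:1806.03421 — 4 statements merged into one kernel-verified Lean document; each statement's English description precedes it below -/
import Mathlib

section
/- Let 0 < α < 1, x > 0, let y be continuous on [0,x] with M = max_{t∈[0,x]} |y(t)|, and let C > 0. For a positive integer N set h = x/N, and suppose (w̄_k)_{k=0}^{N−1} are real numbers with w̄_k = (−1)^k C(α,k) for 0 ≤ k ≤ ⌈N/5⌉ and |w̄_k − (−1)^k C(α,k)| ≤ C/k^{3+α} for ⌈N/5⌉ < k ≤ N−1. Then (1/h^α) |Σ_{k=0}^{N−1} (w̄_k − (−1)^k C(α,k)) y(x − k h)| ≤ C M (5/x)^{2+α} h². -/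
/-!
The weights agree with `(-1)^k C(α,k)` for `k ≤ m := ⌈N/5⌉`, so only the tail `k > m`
contributes, and there each term is at most `C M / k^(3+α)`. Comparing `1/k²` with
`1/(k-1) - 1/k` and telescoping gives `∑_{k>m} k^(-(3+α)) ≤ m^(-(2+α)) ≤ (5/N)^(2+α)`, and
`5/N = (5/x) h` with `h = x/N` turns this into the claimed bound after dividing by `h^α`.
-/

open Finset

/-- Generalized binomial coefficient `C(a,k) = a(a-1)⋯(a-k+1)/k!`. -/
noncomputable def genBinom (a : ℝ) : ℕ → ℝ
  | 0 => 1
  | k + 1 => genBinom a k * (a - k) / (k + 1)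

theorem sum_Ioc_one_div_sq_le_sub {m n : ℕ} (hm : 0 < m) (hmn : m ≤ n) :
    ∑ k ∈ Ioc m n, 1 / (k : ℝ) ^ 2 ≤ 1 / (m : ℝ) - 1 / (n : ℝ) := by
  induction n, hmn using Nat.le_induction with
  | base => simp
  | succ n hmn ih =>
    rw [sum_Ioc_succ_top hmn]
    have hn : (0 : ℝ) < n := by exact_mod_cast hm.trans_le hmn
    have hstep : 1 / ((n + 1 : ℕ) : ℝ) ^ 2 ≤ 1 / n - 1 / (n + 1 : ℕ) := by
      push_cast
      rw [div_sub_div _ _ hn.ne' (by positivity), div_le_div_iff₀ (by positivity) (by positivity)]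
      nlinarith
    linarith

theorem sum_Ioc_one_div_sq_le {m : ℕ} (hm : 0 < m) (n : ℕ) :
    ∑ k ∈ Ioc m n, 1 / (k : ℝ) ^ 2 ≤ 1 / (m : ℝ) := by
  rcases le_total m n with hmn | hnm
  · linarith [sum_Ioc_one_div_sq_le_sub hm hmn, show (0 : ℝ) ≤ 1 / n by positivity]
  · rw [Ioc_eq_empty_of_le hnm, sum_empty]
    positivity

theorem sum_Ioc_one_div_rpow_le {p : ℝ} (hp : 2 ≤ p) {m : ℕ} (hm : 0 < m) (n : ℕ) :
    ∑ k ∈ Ioc m n, 1 / (k : ℝ) ^ p ≤ 1 / (m : ℝ) ^ (p - 1) := by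
  have hm' : (0 : ℝ) < m := by exact_mod_cast hm
  have hterm : ∀ k ∈ Ioc m n,
      1 / (k : ℝ) ^ p ≤ 1 / (m : ℝ) ^ (p - 2) * (1 / (k : ℝ) ^ 2) := by
    intro k hk
    have hmk : (m : ℝ) ≤ k := by exact_mod_cast (mem_Ioc.1 hk).1.le
    have hk : (0 : ℝ) < k := hm'.trans_le hmk
    have hsplit : (k : ℝ) ^ p = (k : ℝ) ^ (p - 2) * (k : ℝ) ^ 2 := by
      rw [← Real.rpow_two, ← Real.rpow_add hk]; ring_nf
    rw [hsplit, one_div_mul_one_div]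
    gcongr
  calc ∑ k ∈ Ioc m n, 1 / (k : ℝ) ^ p
      ≤ ∑ k ∈ Ioc m n, 1 / (m : ℝ) ^ (p - 2) * (1 / (k : ℝ) ^ 2) := sum_le_sum hterm
    _ = 1 / (m : ℝ) ^ (p - 2) * ∑ k ∈ Ioc m n, 1 / (k : ℝ) ^ 2 := (mul_sum ..).symm
    _ ≤ 1 / (m : ℝ) ^ (p - 2) * (1 / m) := by gcongr; exact sum_Ioc_one_div_sq_le hm n
    _ = 1 / (m : ℝ) ^ (p - 1) := by
      rw [one_div_mul_one_div, show p - 1 = (p - 2) + 1 by ring, Real.rpow_add_one hm'.ne']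

theorem abs_sum_range_mul_le_of_tail_bound {e u : ℕ → ℝ} {m N : ℕ} {C M p : ℝ}
    (hp : 2 ≤ p) (hm : 0 < m) (hC : 0 ≤ C) (hM : 0 ≤ M) (he₀ : ∀ k ≤ m, e k = 0)
    (he : ∀ k, m < k → k < N → |e k| ≤ C / (k : ℝ) ^ p) (hu : ∀ k < N, |u k| ≤ M) :
    |∑ k ∈ range N, e k * u k| ≤ C * M / (m : ℝ) ^ (p - 1) := by
  have hterm : ∀ k ∈ range N,
      |e k * u k| ≤ if m < k then C * M * (1 / (k : ℝ) ^ p) else 0 := by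
    intro k hk
    have hkN := mem_range.1 hk
    split_ifs with hmk
    · calc |e k * u k| = |e k| * |u k| := abs_mul _ _
        _ ≤ C / (k : ℝ) ^ p * M :=
          mul_le_mul (he k hmk hkN) (hu k hkN) (abs_nonneg _) (by positivity)
        _ = C * M * (1 / (k : ℝ) ^ p) := by ring
    · simp [he₀ k (not_lt.1 hmk)]
  calc |∑ k ∈ range N, e k * u k|
      ≤ ∑ k ∈ range N, |e k * u k| := abs_sum_le_sum_abs _ _
    _ ≤ ∑ k ∈ range N, if m < k then C * M * (1 / (k : ℝ) ^ p) else 0 := sum_le_sum hterm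
    _ = ∑ k ∈ (range N).filter (m < ·), C * M * (1 / (k : ℝ) ^ p) := (sum_filter ..).symm
    _ ≤ ∑ k ∈ Ioc m N, C * M * (1 / (k : ℝ) ^ p) := by
      refine sum_le_sum_of_subset_of_nonneg (fun k hk => ?_) (fun k _ _ => by positivity)
      simp only [mem_filter, mem_range] at hk
      exact mem_Ioc.2 ⟨hk.2, hk.1.le⟩
    _ = C * M * ∑ k ∈ Ioc m N, 1 / (k : ℝ) ^ p := (mul_sum ..).symm
    _ ≤ C * M * (1 / (m : ℝ) ^ (p - 1)) := by gcongr; exact sum_Ioc_one_div_rpow_le hp hm N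
    _ = C * M / (m : ℝ) ^ (p - 1) := mul_one_div _ _

theorem one_div_rpow_mul_mul_mul_rpow {h : ℝ} (hh : 0 < h) {c : ℝ} (hc : 0 ≤ c) (K α : ℝ) :
    1 / h ^ α * (K * (c * h) ^ (2 + α)) = K * c ^ (2 + α) * h ^ 2 := by
  rw [Real.mul_rpow hc hh.le, Real.rpow_add hh, Real.rpow_two]
  field_simp

theorem sub_natCast_mul_div_mem_Icc {x : ℝ} (hx : 0 ≤ x) {k N : ℕ} (hk : k ≤ N) :
    x - k * (x / N) ∈ Set.Icc 0 x := by
  have hkN : (k : ℝ) / N ≤ 1 := div_le_one_of_le₀ (by exact_mod_cast hk) (Nat.cast_nonneg N)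
  constructor
  · rw [mul_div_left_comm]
    linarith [mul_le_of_le_one_right hx hkN]
  · have : 0 ≤ (k : ℝ) * (x / N) := by positivity
    linarith

theorem stmt1_general (α x M C : ℝ) (hα0 : 0 < α) (hx : 0 < x)
    (y : ℝ → ℝ)
    (hM : IsGreatest ((fun t => |y t|) '' Set.Icc 0 x) M)
    (hC : 0 < C) (N : ℕ) (hN : 0 < N) (w : ℕ → ℝ)
    (hw1 : ∀ k, k ≤ ⌈(N : ℝ) / 5⌉₊ → w k = (-1 : ℝ) ^ k * genBinom α k)
    (hw2 : ∀ k, ⌈(N : ℝ) / 5⌉₊ < k → k ≤ N - 1 →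
      |w k - (-1 : ℝ) ^ k * genBinom α k| ≤ C / (k : ℝ) ^ (3 + α)) :
    (1 / (x / N) ^ α) *
        |∑ k ∈ Finset.range N, (w k - (-1 : ℝ) ^ k * genBinom α k) * y (x - k * (x / N))| ≤
      C * M * (5 / x) ^ (2 + α) * (x / N) ^ 2 := by
  set m := ⌈(N : ℝ) / 5⌉₊
  have hm : 0 < m := Nat.ceil_pos.2 (by positivity)
  have hM₀ : 0 ≤ M := by
    obtain ⟨t, -, rfl⟩ := hM.1
    exact abs_nonneg _
  have hsum := abs_sum_range_mul_le_of_tail_bound (p := 3 + α)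
    (e := fun k => w k - (-1 : ℝ) ^ k * genBinom α k) (u := fun k => y (x - k * (x / N)))
    (by linarith) hm hC.le hM₀ (fun k hk => by simp only [hw1 k hk, sub_self])
    (fun k hmk hkN => hw2 k hmk (by omega))
    (fun k hk => hM.2 ⟨_, sub_natCast_mul_div_mem_Icc hx.le hk.le, rfl⟩)
  have hm_ge : 1 / (m : ℝ) ^ (2 + α) ≤ (5 / x * (x / N)) ^ (2 + α) := by
    rw [div_mul_div_cancel₀ hx.ne', one_div, ← Real.inv_rpow (by positivity), ← inv_div]
    gcongr
    exact Nat.le_ceil _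
  calc _ ≤ 1 / (x / N) ^ α * (C * M * (5 / x * (x / N)) ^ (2 + α)) := by
        gcongr
        refine hsum.trans ?_
        rw [show 3 + α - 1 = 2 + α by ring, ← mul_one_div (C * M)]
        gcongr
    _ = C * M * (5 / x) ^ (2 + α) * (x / N) ^ 2 :=
        one_div_rpow_mul_mul_mul_rpow (by positivity) (by positivity) _ _

theorem stmt1 (α x M C : ℝ) (hα0 : 0 < α) (hα1 : α < 1) (hx : 0 < x)
    (y : ℝ → ℝ) (hy : ContinuousOn y (Set.Icc 0 x))
    (hM : IsGreatest ((fun t => |y t|) '' Set.Icc 0 x) M)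
    (hC : 0 < C) (N : ℕ) (hN : 0 < N) (w : ℕ → ℝ)
    (hw1 : ∀ k, k ≤ ⌈(N : ℝ) / 5⌉₊ → w k = (-1 : ℝ) ^ k * genBinom α k)
    (hw2 : ∀ k, ⌈(N : ℝ) / 5⌉₊ < k → k ≤ N - 1 →
      |w k - (-1 : ℝ) ^ k * genBinom α k| ≤ C / (k : ℝ) ^ (3 + α)) :
    (1 / (x / N) ^ α) *
        |∑ k ∈ Finset.range N, (w k - (-1 : ℝ) ^ k * genBinom α k) * y (x - k * (x / N))| ≤
      C * M * (5 / x) ^ (2 + α) * (x / N) ^ 2 :=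
  stmt1_general α x M C hα0 hx y hM hC N hN w hw1 hw2
end

section
/- Let 0 < α < 1. There exists a constant C > 0 such that for every integer k ≥ 1, |(−1)^k C(α,k) − 1/(Γ(−α) k^{1+α}) + α/(2 Γ(−1−α) k^{2+α}) − α(3α+1)/(24 Γ(−2−α) k^{3+α})| ≤ C / k^{4+α}. -/
/-!
Write `P(x) = 1 + α(1+α)/2 x + α(3α+1)(1+α)(2+α)/24 x²` and `g k = (-1)^k C(α,k) k^(1+α) / P(1/k)`.
Euler's limit formula for `Γ` gives `g k → 1/Γ(-α)`. The ratio `g (k+1) / g k` equals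
`(1 - α/k) (1 + 1/k)^α P(1/k) / P(1/(k+1))`; expanding `(1 + 1/k)^α` to third order, the
coefficients of `P` are exactly those that make this ratio `1 + O(k⁻⁴)`. Telescoping the increments
then gives `g k = 1/Γ(-α) + O(k⁻³)`, and multiplying by `P(1/k) / k^(1+α)` yields the theorem once
`Γ(s+1) = s Γ(s)` expresses its three terms through `Γ(-α)`.
-/

open Finset

open Real Filter Topology

theorem genBinom_succ (a : ℝ) (k : ℕ) : genBinom a (k + 1) = genBinom a k * (a - k) / (k + 1) :=
  rfl

theorem succ_mul_genBinom_succ (b : ℝ) (k : ℕ) :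
    (k + 1) * genBinom b (k + 1) = b * genBinom (b - 1) k := by
  induction k with
  | zero => simp [genBinom]
  | succ k ih =>
    rw [genBinom_succ, genBinom_succ (b - 1)]
    push_cast
    field_simp
    linear_combination (b - 1 - k) * ih

theorem neg_one_pow_mul_genBinom_mul_factorial (a : ℝ) (n : ℕ) :
    (-1) ^ n * genBinom a n * n.factorial = ∏ j ∈ range n, (-a + j) := by
  induction n with
  | zero => simp [genBinom]
  | succ n ih =>
    rw [prod_range_succ, ← ih, genBinom_succ, Nat.factorial_succ]
    push_cast
    field_simp
    ring

theorem hasDerivAt_sum_genBinom_mul_pow (b s : ℝ) (n : ℕ) :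
    HasDerivAt (fun x ↦ ∑ j ∈ range (n + 1), genBinom b j * x ^ j)
      (b * ∑ j ∈ range n, genBinom (b - 1) j * s ^ j) s := by
  induction n with
  | zero => simpa [genBinom] using hasDerivAt_const s (1 : ℝ)
  | succ n ih =>
    simp_rw [sum_range_succ _ (n + 1)]
    refine (ih.add ((hasDerivAt_pow (n + 1) s).const_mul (genBinom b (n + 1)))).congr_deriv ?_
    rw [sum_range_succ, mul_add, ← mul_assoc b, ← succ_mul_genBinom_succ]
    push_cast
    ring

/-- The derivative of the remainder for `b` is `b` times the remainder for `b - 1`, so induction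
reduces the bound to `(1 + s) ^ (b - n) ≤ 1`. -/
theorem abs_one_add_rpow_sub_sum_genBinom_le {b t : ℝ} (n : ℕ) (hb : b ≤ n) (ht : 0 ≤ t) :
    |(1 + t) ^ b - ∑ j ∈ range n, genBinom b j * t ^ j| ≤ |genBinom b n| * t ^ n := by
  induction n generalizing b t with
  | zero =>
    have hpos : 0 < (1 + t) ^ b := by positivity
    simpa [genBinom, abs_of_pos hpos] using
      rpow_le_one_of_one_le_of_nonpos (by linarith) (by simpa using hb)
  | succ n ih =>
    have hderiv : ∀ s ∈ Set.Icc 0 t,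
        HasDerivAt (fun x ↦ (1 + x) ^ b - ∑ j ∈ range (n + 1), genBinom b j * x ^ j)
          (b * ((1 + s) ^ (b - 1) - ∑ j ∈ range n, genBinom (b - 1) j * s ^ j)) s := by
      intro s hs
      have h := ((hasDerivAt_id' s).const_add 1).rpow_const (p := b) (Or.inl (by linarith [hs.1]))
      exact (h.sub (hasDerivAt_sum_genBinom_mul_pow b s n)).congr_deriv (by ring)
    refine image_norm_le_of_norm_deriv_right_le_deriv_boundary
      (fun s hs ↦ (hderiv s hs).continuousAt.continuousWithinAt)
      (fun s hs ↦ (hderiv s (Set.Ico_subset_Icc_self hs)).hasDerivWithinAt)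
      (B := fun s ↦ |genBinom b (n + 1)| * s ^ (n + 1)) (by simp [sum_range_succ', genBinom])
      (fun s ↦ (hasDerivAt_pow _ s).const_mul _) (fun s hs ↦ ?_) ⟨ht, le_rfl⟩
    have hrem := ih (b := b - 1) (by push_cast at hb; linarith) hs.1
    have hcoeff : (n + 1 : ℝ) * |genBinom b (n + 1)| = |b| * |genBinom (b - 1) n| := by
      rw [← abs_mul, ← succ_mul_genBinom_succ, abs_mul,
        abs_of_pos (by positivity : (0 : ℝ) < n + 1)]
    rw [norm_mul, Real.norm_eq_abs, Real.norm_eq_abs, Nat.add_sub_cancel]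
    calc _ ≤ |b| * (|genBinom (b - 1) n| * s ^ n) := by gcongr
      _ = _ := by rw [← mul_assoc, ← hcoeff]; push_cast; ring

/-- The correction factor in `(-1)^k C(a,k) ≈ binomCorr a (1/k) / (Γ(-a) k^(1+a))`. -/
noncomputable def binomCorr (a x : ℝ) : ℝ :=
  1 + a * (1 + a) / 2 * x + a * (3 * a + 1) * (1 + a) * (2 + a) / 24 * x ^ 2

theorem one_le_binomCorr {a x : ℝ} (ha : 0 ≤ a) (hx : 0 ≤ x) : 1 ≤ binomCorr a x := by
  unfold binomCorr
  have : 0 ≤ a * (1 + a) / 2 * x + a * (3 * a + 1) * (1 + a) * (2 + a) / 24 * x ^ 2 := by positivity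
  linarith

theorem binomCorr_le_binomCorr_one {a x : ℝ} (ha : 0 ≤ a) (hx0 : 0 ≤ x) (hx1 : x ≤ 1) :
    binomCorr a x ≤ binomCorr a 1 := by
  unfold binomCorr
  have hx2 : x ^ 2 ≤ 1 := pow_le_one₀ hx0 hx1
  gcongr

theorem exists_abs_mul_sum_genBinom_binomCorr_sub_le (a : ℝ) : ∃ c, ∀ x ∈ Set.Icc (0 : ℝ) 1,
    |(1 - a * x) * (∑ j ∈ range 4, genBinom a j * x ^ j) * binomCorr a x
      - binomCorr a (x / (1 + x))| ≤ c * x ^ 4 := by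
  -- `(1 + x) ^ 2` times the difference equals `x ^ 4 * Q x` (found by computer algebra)
  set Q : ℝ → ℝ := fun x ↦ a / 144 * (
    (36 - 120 * a - 117 * a ^ 2 - 159 * a ^ 3 - 63 * a ^ 4 - 9 * a ^ 5)
    + (48 - 92 * a - 218 * a ^ 3 - 114 * a ^ 4 - 50 * a ^ 5 - 6 * a ^ 6) * x
    + a * (-22 + 47 * a - 61 * a ^ 2 - 34 * a ^ 3 - 58 * a ^ 4 - 13 * a ^ 5 - 3 * a ^ 6) * x ^ 2
    + a * (4 - 14 * a + 4 * a ^ 2 + 22 * a ^ 3 - 2 * a ^ 4 - 8 * a ^ 5 - 6 * a ^ 6) * x ^ 3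
    + a ^ 2 * (-4 - 12 * a + 5 * a ^ 2 + 15 * a ^ 3 - a ^ 4 - 3 * a ^ 5) * x ^ 4) with hQ
  obtain ⟨c, hc⟩ := isCompact_Icc.exists_bound_of_continuousOn (f := Q) (by fun_prop)
  refine ⟨c, fun x hx ↦ ?_⟩
  have hx1 : 1 ≤ 1 + x := by linarith [hx.1]
  have hid : (1 - a * x) * (∑ j ∈ range 4, genBinom a j * x ^ j) * binomCorr a x
      - binomCorr a (x / (1 + x)) = x ^ 4 * Q x / (1 + x) ^ 2 := by
    simp only [sum_range_succ, range_zero, sum_empty, genBinom, binomCorr, hQ]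
    field_simp
    ring
  rw [hid, abs_div, abs_mul, abs_of_nonneg (by positivity : (0 : ℝ) ≤ x ^ 4), mul_comm c]
  calc x ^ 4 * |Q x| / |(1 + x) ^ 2| ≤ x ^ 4 * |Q x| / 1 := by
        gcongr
        rw [abs_of_nonneg (by positivity)]
        exact one_le_pow₀ hx1
    _ ≤ x ^ 4 * c := by
        rw [div_one]
        exact mul_le_mul_of_nonneg_left (hc x hx) (by positivity)

theorem exists_abs_mul_one_add_rpow_binomCorr_sub_le {a : ℝ} (ha : a ≤ 4) :
    ∃ c, ∀ x ∈ Set.Icc (0 : ℝ) 1,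
      |(1 - a * x) * (1 + x) ^ a * binomCorr a x - binomCorr a (x / (1 + x))| ≤ c * x ^ 4 := by
  obtain ⟨c, hc⟩ := exists_abs_mul_sum_genBinom_binomCorr_sub_le a
  obtain ⟨M, hM⟩ := isCompact_Icc.exists_bound_of_continuousOn
    (f := fun x ↦ (1 - a * x) * binomCorr a x) (by unfold binomCorr; fun_prop)
  refine ⟨M * |genBinom a 4| + c, fun x hx ↦ ?_⟩
  have htaylor := abs_one_add_rpow_sub_sum_genBinom_le 4 (by norm_num; exact ha) hx.1
  set T := ∑ j ∈ range 4, genBinom a j * x ^ j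
  calc _ = |(1 - a * x) * binomCorr a x * ((1 + x) ^ a - T)
          + ((1 - a * x) * T * binomCorr a x - binomCorr a (x / (1 + x)))| := by ring_nf
    _ ≤ M * (|genBinom a 4| * x ^ 4) + c * x ^ 4 := by
        refine (abs_add_le _ _).trans (add_le_add ?_ (hc x hx))
        rw [abs_mul]
        exact mul_le_mul (hM x hx) htaylor (abs_nonneg _) ((abs_nonneg _).trans (hM x hx))
    _ = _ := by ring

theorem abs_sub_le_of_tendsto_of_abs_sub_succ_le {u v : ℕ → ℝ} {L : ℝ} {N : ℕ}
    (hu : Tendsto u atTop (𝓝 L)) (hv : Tendsto v atTop (𝓝 0))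
    (h : ∀ n ≥ N, |u (n + 1) - u n| ≤ v n - v (n + 1)) {n : ℕ} (hn : N ≤ n) :
    |u n - L| ≤ v n := by
  have htel : ∀ m ≥ n, |u n - u m| ≤ v n - v m := by
    intro m hm
    induction m, hm using Nat.le_induction with
    | base => simp
    | succ m hm ih =>
      calc |u n - u (m + 1)| ≤ |u n - u m| + |u (m + 1) - u m| := by
            simpa only [abs_sub_comm (u m)] using abs_sub_le (u n) (u m) (u (m + 1))
        _ ≤ v n - v (m + 1) := by linarith [h m (hn.trans hm)]
  have hlim : Tendsto (fun m ↦ v n - v m) atTop (𝓝 (v n - 0)) := tendsto_const_nhds.sub hv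
  rw [sub_zero] at hlim
  exact le_of_tendsto_of_tendsto ((tendsto_const_nhds.sub hu).abs) hlim
    (eventually_atTop.2 ⟨n, htel⟩)

/-- Euler's limit formula, as `GammaSeq (-a) n = n ^ (-a) / ((-1) ^ n C(a,n) (n - a))`. -/
theorem tendsto_neg_one_pow_mul_genBinom_mul_rpow {a : ℝ} (ha : ∀ m : ℕ, a ≠ m) :
    Tendsto (fun n : ℕ ↦ (-1) ^ n * genBinom a n * (n : ℝ) ^ (1 + a)) atTop
      (𝓝 (Gamma (-a))⁻¹) := by
  have hΓ : Gamma (-a) ≠ 0 := Gamma_ne_zero fun m hm ↦ ha m (neg_inj.1 hm)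
  have hlim := (tendsto_natCast_div_add_atTop (-a)).mul ((GammaSeq_tendsto_Gamma (-a)).inv₀ hΓ)
  rw [one_mul] at hlim
  refine hlim.congr' (eventually_atTop.2 ⟨1, fun n hn ↦ ?_⟩)
  have hn0 : (0 : ℝ) < n := by exact_mod_cast hn
  have hna : (n : ℝ) + -a ≠ 0 := fun h ↦ ha n (by linarith)
  have hfac : (n.factorial : ℝ) ≠ 0 := by positivity
  simp only [GammaSeq, prod_range_succ, ← neg_one_pow_mul_genBinom_mul_factorial,
    rpow_add hn0, rpow_one, rpow_neg hn0.le]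
  field_simp
  ring

noncomputable def normalizedBinom (a : ℝ) (k : ℕ) : ℝ :=
  (-1) ^ k * genBinom a k * (k : ℝ) ^ (1 + a) / binomCorr a (1 / k)

theorem neg_one_pow_mul_genBinom_sub_eq {a : ℝ} (ha : 0 ≤ a) {k : ℕ} (hk : 1 ≤ k) :
    (-1) ^ k * genBinom a k - binomCorr a (1 / k) / (Gamma (-a) * (k : ℝ) ^ (1 + a))
      = (normalizedBinom a k - (Gamma (-a))⁻¹) * binomCorr a (1 / k) / (k : ℝ) ^ (1 + a) := by
  have hk0 : (0 : ℝ) < k := by exact_mod_cast hk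
  have hP := one_le_binomCorr ha (by positivity : (0 : ℝ) ≤ 1 / k)
  have hK : 0 < (k : ℝ) ^ (1 + a) := by positivity
  unfold normalizedBinom
  field_simp

theorem tendsto_normalizedBinom {a : ℝ} (ha : ∀ m : ℕ, a ≠ m) :
    Tendsto (normalizedBinom a) atTop (𝓝 (Gamma (-a))⁻¹) := by
  have hcorr : Tendsto (fun n : ℕ ↦ binomCorr a (1 / n)) atTop (𝓝 (binomCorr a 0)) :=
    ((by unfold binomCorr; fun_prop : Continuous (binomCorr a)).tendsto 0).comp
      tendsto_one_div_atTop_nhds_zero_nat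
  have hcorr0 : binomCorr a 0 = 1 := by simp [binomCorr]
  have hlim := (tendsto_neg_one_pow_mul_genBinom_mul_rpow ha).div hcorr (by simp [hcorr0])
  rwa [hcorr0, div_one] at hlim

theorem normalizedBinom_succ_sub {a : ℝ} (ha : 0 ≤ a) {k : ℕ} (hk : 1 ≤ k) :
    normalizedBinom a (k + 1) - normalizedBinom a k = normalizedBinom a k *
      ((1 - a * (1 / k)) * (1 + 1 / k) ^ a * binomCorr a (1 / k)
        - binomCorr a (1 / k / (1 + 1 / k))) / binomCorr a (1 / k / (1 + 1 / k)) := by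
  have hk0 : (0 : ℝ) < k := by exact_mod_cast hk
  have hpow : (1 + 1 / (k : ℝ)) ^ a = ((k : ℝ) + 1) ^ a / (k : ℝ) ^ a := by
    rw [show 1 + 1 / (k : ℝ) = (k + 1) / k by field_simp, div_rpow (by positivity) hk0.le]
  have hshift : 1 / (k : ℝ) / (1 + 1 / k) = 1 / ((k : ℝ) + 1) := by field_simp
  have hP₀ := one_le_binomCorr ha (by positivity : (0 : ℝ) ≤ 1 / k)
  have hP₁ := one_le_binomCorr ha (by positivity : (0 : ℝ) ≤ 1 / ((k : ℝ) + 1))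
  simp only [normalizedBinom, genBinom_succ, pow_succ, hpow, hshift, Nat.cast_succ,
    rpow_add hk0, rpow_add (by positivity : (0 : ℝ) < k + 1), rpow_one]
  field_simp
  ring

/-- `(x - 1/2)⁻³ - (x + 1/2)⁻³ = 3 ∫ t⁻⁴` over `[x - 1/2, x + 1/2]`, which is at least `3 x⁻⁴` by
convexity. -/
theorem inv_pow_four_le {x : ℝ} (hx : 1 / 2 < x) :
    1 / x ^ 4 ≤ 8 / 3 * (1 / (2 * x - 1) ^ 3 - 1 / (2 * x + 1) ^ 3) := by
  have h₁ : 0 < 2 * x - 1 := by linarith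
  have h₂ : 0 < 2 * x + 1 := by linarith
  rw [div_sub_div _ _ (by positivity) (by positivity), mul_div_assoc', div_le_div_iff₀
    (by positivity) (by positivity)]
  nlinarith [sq_nonneg (x ^ 2), sq_nonneg (x ^ 2 - 1 / 8), sq_nonneg x]

theorem exists_abs_normalizedBinom_sub_le {a : ℝ} (ha0 : 0 ≤ a) (ha4 : a ≤ 4)
    (ha : ∀ m : ℕ, a ≠ m) :
    ∃ D > 0, ∀ k : ℕ, 1 ≤ k → |normalizedBinom a k - (Gamma (-a))⁻¹| ≤ D / (k : ℝ) ^ 3 := by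
  have hlim := tendsto_normalizedBinom ha
  obtain ⟨B, hB⟩ := hlim.abs.bddAbove_range
  obtain ⟨c, hc⟩ := exists_abs_mul_one_add_rpow_binomCorr_sub_le ha4
  set D := |B * c| + 1
  have hstep : ∀ k ≥ 1, |normalizedBinom a (k + 1) - normalizedBinom a k| ≤ D / (k : ℝ) ^ 4 := by
    intro k hk
    have hk0 : (0 : ℝ) < k := by exact_mod_cast hk
    have hx : 1 / (k : ℝ) ∈ Set.Icc 0 1 :=
      ⟨by positivity, (div_le_one hk0).2 (by exact_mod_cast hk)⟩
    have hP := one_le_binomCorr ha0 (by positivity : (0 : ℝ) ≤ 1 / k / (1 + 1 / k))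
    rw [normalizedBinom_succ_sub ha0 hk, abs_div, abs_mul,
      abs_of_pos (by linarith : 0 < binomCorr a (1 / k / (1 + 1 / k)))]
    have hgk : |normalizedBinom a k| ≤ B := hB ⟨k, rfl⟩
    calc _ ≤ |normalizedBinom a k| * |(1 - a * (1 / k)) * (1 + 1 / k) ^ a * binomCorr a (1 / k)
            - binomCorr a (1 / k / (1 + 1 / k))| := div_le_self (by positivity) hP
      _ ≤ B * (c * (1 / k) ^ 4) :=
          mul_le_mul hgk (hc _ hx) (abs_nonneg _) ((abs_nonneg _).trans hgk)
      _ ≤ D / (k : ℝ) ^ 4 := by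
          rw [← mul_assoc, one_div_pow, mul_one_div]
          gcongr
          exact (le_abs_self _).trans (by linarith)
  set v : ℕ → ℝ := fun n ↦ 8 / 3 * D / (2 * n - 1) ^ 3
  have hv : Tendsto v atTop (𝓝 0) := by
    refine tendsto_const_nhds.div_atTop ((tendsto_pow_atTop three_ne_zero).comp ?_)
    exact tendsto_atTop_add_const_right _ (-1)
      (tendsto_natCast_atTop_atTop.const_mul_atTop two_pos)
  have htel : ∀ n ≥ 1, |normalizedBinom a (n + 1) - normalizedBinom a n| ≤ v n - v (n + 1) := by
    intro n hn
    have hn' : (1 : ℝ) / 2 < n := by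
      have : (1 : ℝ) ≤ n := by exact_mod_cast hn
      linarith
    calc _ ≤ D / (n : ℝ) ^ 4 := hstep n hn
      _ ≤ D * (8 / 3 * (1 / (2 * n - 1) ^ 3 - 1 / (2 * n + 1) ^ 3)) := by
          rw [div_eq_mul_one_div]
          gcongr
          exact inv_pow_four_le hn'
      _ = v n - v (n + 1) := by
          simp only [v]
          push_cast
          ring
  refine ⟨8 / 3 * D, by positivity, fun k hk ↦ ?_⟩
  have hk1 : (1 : ℝ) ≤ k := by exact_mod_cast hk
  calc _ ≤ v k := abs_sub_le_of_tendsto_of_abs_sub_succ_le hlim hv htel hk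
    _ ≤ 8 / 3 * D / (k : ℝ) ^ 3 := by
        simp only [v]
        gcongr
        linarith

theorem Gamma_expansion_eq_binomCorr {a k : ℝ} (ha₁ : a ≠ -1) (ha₂ : a ≠ -2) (hk : 0 < k) :
    1 / (Gamma (-a) * k ^ (1 + a)) - a / (2 * Gamma (-1 - a) * k ^ (2 + a))
      + a * (3 * a + 1) / (24 * Gamma (-2 - a) * k ^ (3 + a))
      = binomCorr a (1 / k) / (Gamma (-a) * k ^ (1 + a)) := by
  have hΓ₁ : Gamma (-1 - a) = (-2 - a) * Gamma (-2 - a) := by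
    rw [← Gamma_add_one (by contrapose! ha₂; linarith)]; ring_nf
  have hΓ₀ : Gamma (-a) = (-1 - a) * Gamma (-1 - a) := by
    rw [← Gamma_add_one (by contrapose! ha₁; linarith)]; ring_nf
  have hpow₂ : k ^ (2 + a) = k * k ^ (1 + a) := by
    rw [show 2 + a = 1 + (1 + a) by ring, rpow_add hk, rpow_one]
  have hpow₃ : k ^ (3 + a) = k ^ 2 * k ^ (1 + a) := by
    rw [show 3 + a = 2 + (1 + a) by ring, rpow_add hk, rpow_two]
  rw [hΓ₀, hΓ₁, hpow₂, hpow₃]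
  by_cases hΓ : Gamma (-2 - a) = 0
  · simp [hΓ]
  have h₁ : -1 - a ≠ 0 := by contrapose! ha₁; linarith
  have h₂ : -2 - a ≠ 0 := by contrapose! ha₂; linarith
  unfold binomCorr
  field_simp
  ring

theorem stmt2 (α : ℝ) (hα0 : 0 < α) (hα1 : α < 1) :
    ∃ C > (0:ℝ), ∀ k : ℕ, 1 ≤ k →
      |(-1 : ℝ) ^ k * genBinom α k - 1 / (Real.Gamma (-α) * (k : ℝ) ^ (1 + α)) +
          α / (2 * Real.Gamma (-1 - α) * (k : ℝ) ^ (2 + α)) -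
          α * (3 * α + 1) / (24 * Real.Gamma (-2 - α) * (k : ℝ) ^ (3 + α))| ≤
        C / (k : ℝ) ^ (4 + α) := by
  have hα : ∀ m : ℕ, α ≠ m := by
    rintro (_ | m) hm <;> push_cast at hm <;> linarith
  obtain ⟨D, hD, hbound⟩ := exists_abs_normalizedBinom_sub_le hα0.le (by linarith) hα
  have hP₁ := one_le_binomCorr hα0.le zero_le_one
  refine ⟨D * binomCorr α 1, by positivity, fun k hk ↦ ?_⟩
  have hk0 : (0 : ℝ) < k := by exact_mod_cast hk
  have hP := one_le_binomCorr hα0.le (by positivity : (0 : ℝ) ≤ 1 / k)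
  calc _ = |normalizedBinom α k - (Gamma (-α))⁻¹| * binomCorr α (1 / k) / (k : ℝ) ^ (1 + α) := by
        rw [sub_add, sub_sub, Gamma_expansion_eq_binomCorr (by linarith) (by linarith) hk0,
          neg_one_pow_mul_genBinom_sub_eq hα0.le hk, abs_div, abs_mul,
          abs_of_pos (by linarith : 0 < binomCorr α (1 / k)),
          abs_of_pos (by positivity : (0 : ℝ) < (k : ℝ) ^ (1 + α))]
    _ ≤ D / (k : ℝ) ^ 3 * binomCorr α 1 / (k : ℝ) ^ (1 + α) := by
        gcongr
        · exact hbound k hk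
        · exact binomCorr_le_binomCorr_one hα0.le (by positivity) ((div_le_one hk0).2 (by simpa))
    _ = D * binomCorr α 1 / (k : ℝ) ^ (4 + α) := by
        rw [show (4 : ℝ) + α = 3 + (1 + α) by ring, rpow_add hk0 3, rpow_ofNat]
        field_simp
end

section
/- Let 0 < α < 1 and define σ_k^{(α)} = ((k−1)^{1−α} − 2 k^{1−α} + (k+1)^{1−α})/Γ(2−α) for integers k ≥ 1. There exists a constant C > 0 such that for every integer k ≥ 2, |σ_k^{(α)} − 1/(Γ(−α) k^{1+α}) − 1/(12 Γ(−2−α) k^{3+α})| ≤ C / k^{5+α}. -/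
/-!
With `c = 1 - α` and `b = 1 / k`, the numerator of `σ_k` is `k ^ c * (f b - 2)` where
`f b = (1 - b) ^ c + (1 + b) ^ c`. Since `f` is even, its Taylor polynomial of order five at `0`
is `2 + c (c - 1) b ^ 2 + c (c - 1) (c - 2) (c - 3) b ^ 4 / 12`, and the Lagrange remainder is
`O(b ^ 6)` uniformly for `b ≤ 1 / 2`. Multiplying back by `k ^ c` gives the expansion, and the
functional equation `Γ (c + 1) = c (c - 1) ⋯ (c - n + 1) Γ (c + 1 - n)` turns the two falling
factorials divided by `Γ (2 - α)` into `1 / Γ (-α)` and `1 / Γ (-2 - α)`.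
-/

open Finset

open Real Set Polynomial

theorem descPochhammer_eval_ne_zero {R : Type*} [CommRing R] [IsDomain R] {s : R} {n : ℕ}
    (hs : ∀ k < n, s ≠ k) : (descPochhammer R n).eval s ≠ 0 := by
  rw [descPochhammer_eval_eq_prod_range]
  exact Finset.prod_ne_zero_iff.mpr fun k hk => sub_ne_zero.mpr (hs k (Finset.mem_range.mp hk))

namespace Real

theorem Gamma_add_one_eq_descPochhammer_mul (s : ℝ) (n : ℕ) (hs : ∀ k < n, s ≠ k) :
    Gamma (s + 1) = (descPochhammer ℝ n).eval s * Gamma (s + 1 - n) := by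
  induction n with
  | zero => simp
  | succ n ih =>
    have hsn : s - n ≠ 0 := sub_ne_zero.mpr (hs n n.lt_succ_self)
    rw [ih fun k hk => hs k (hk.trans n.lt_succ_self), descPochhammer_succ_eval,
      show s + 1 - n = (s - n) + 1 by ring, Gamma_add_one hsn, Nat.cast_succ,
      show s + 1 - (n + 1) = s - n by ring]
    ring

theorem one_div_Gamma_mul_rpow_eq {s t p K : ℝ} {n : ℕ} (hs : ∀ k < n, s ≠ k) (hK : 0 ≤ K)
    (ht : t = s + 1 - n) (hp : p = n - s) :
    1 / (Gamma t * K ^ p) = (descPochhammer ℝ n).eval s * K ^ (s - n) / Gamma (s + 1) := by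
  rw [Gamma_add_one_eq_descPochhammer_mul s n hs, ← ht, show s - n = -p by linarith, rpow_neg hK]
  rcases eq_or_ne (Gamma t) 0 with h | h
  · simp [h]
  · field_simp [descPochhammer_eval_ne_zero hs]

end Real

section

variable (c : ℝ)

theorem iteratedDeriv_const_add_rpow (a : ℝ) (n : ℕ) (x : ℝ) :
    iteratedDeriv n (fun y => (a + y) ^ c) x = (descPochhammer ℝ n).eval c * (a + x) ^ (c - n) := by
  rw [iteratedDeriv_comp_const_add n (fun y => y ^ c) a, iteratedDeriv_eq_iterate]
  exact iter_deriv_rpow_const c (a + x) n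

theorem iteratedDeriv_const_sub_rpow (a : ℝ) (n : ℕ) (x : ℝ) :
    iteratedDeriv n (fun y => (a - y) ^ c) x =
      (-1) ^ n * (descPochhammer ℝ n).eval c * (a - x) ^ (c - n) := by
  rw [iteratedDeriv_comp_const_sub n (fun y => y ^ c) a, iteratedDeriv_eq_iterate, mul_assoc]
  exact congrArg ((-1) ^ n * ·) (iter_deriv_rpow_const c (a - x) n)

theorem contDiffAt_one_sub_rpow {n : ℕ} {x : ℝ} (hx : x < 1) :
    ContDiffAt ℝ n (fun y => (1 - y) ^ c) x :=
  ContDiffAt.rpow_const_of_ne (f := fun y => 1 - y) (by fun_prop) (ne_of_gt (by linarith))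

theorem contDiffAt_one_add_rpow {n : ℕ} {x : ℝ} (hx : -1 < x) :
    ContDiffAt ℝ n (fun y => (1 + y) ^ c) x :=
  ContDiffAt.rpow_const_of_ne (f := fun y => 1 + y) (by fun_prop) (ne_of_gt (by linarith))

theorem contDiffAt_one_sub_rpow_add_one_add_rpow {n : ℕ} {x : ℝ} (hx : |x| < 1) :
    ContDiffAt ℝ n (fun y => (1 - y) ^ c + (1 + y) ^ c) x :=
  (contDiffAt_one_sub_rpow c (abs_lt.mp hx).2).add (contDiffAt_one_add_rpow c (abs_lt.mp hx).1)

theorem iteratedDeriv_one_sub_rpow_add_one_add_rpow (n : ℕ) {x : ℝ} (hx : |x| < 1) :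
    iteratedDeriv n (fun y => (1 - y) ^ c + (1 + y) ^ c) x =
      (descPochhammer ℝ n).eval c * ((-1) ^ n * (1 - x) ^ (c - n) + (1 + x) ^ (c - n)) := by
  obtain ⟨hx₁, hx₂⟩ := abs_lt.mp hx
  rw [iteratedDeriv_fun_add (contDiffAt_one_sub_rpow c hx₂) (contDiffAt_one_add_rpow c hx₁),
    iteratedDeriv_const_sub_rpow, iteratedDeriv_const_add_rpow]
  ring

theorem exists_one_sub_rpow_add_one_add_rpow_eq_taylor {b : ℝ} (hb₀ : 0 < b) (hb₁ : b < 1) :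
    ∃ ξ ∈ Ioo 0 b, (1 - b) ^ c + (1 + b) ^ c -
        (2 + (descPochhammer ℝ 2).eval c * b ^ 2 + (descPochhammer ℝ 4).eval c / 12 * b ^ 4) =
      (descPochhammer ℝ 6).eval c * ((1 - ξ) ^ (c - 6) + (1 + ξ) ^ (c - 6)) * b ^ 6 / 720 := by
  set f := fun y : ℝ => (1 - y) ^ c + (1 + y) ^ c
  have hsmall : ∀ y ∈ uIcc 0 b, |y| < 1 := fun y hy => by
    rw [uIcc_of_le hb₀.le] at hy
    exact abs_lt.mpr ⟨by linarith [hy.1], by linarith [hy.2]⟩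
  obtain ⟨ξ, hξ, hrem⟩ := taylor_mean_remainder_lagrange_iteratedDeriv (f := f) (n := 5) hb₀.ne
    fun y hy => (contDiffAt_one_sub_rpow_add_one_add_rpow c (hsmall y hy)).contDiffWithinAt
  rw [uIoo_of_le hb₀.le] at hξ
  refine ⟨ξ, hξ, ?_⟩
  have htaylor : taylorWithinEval f 5 (uIcc 0 b) 0 b =
      2 + (descPochhammer ℝ 2).eval c * b ^ 2 + (descPochhammer ℝ 4).eval c / 12 * b ^ 4 := by
    have hcoeff : ∀ i, iteratedDerivWithin i f (uIcc 0 b) 0 =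
        (descPochhammer ℝ i).eval c * ((-1) ^ i + 1) := fun i => by
      rw [iteratedDerivWithin_eq_iteratedDeriv (uniqueDiffOn_uIcc hb₀.ne)
          (contDiffAt_one_sub_rpow_add_one_add_rpow c (by simp)) left_mem_uIcc,
        iteratedDeriv_one_sub_rpow_add_one_add_rpow c i (by simp)]
      simp
    simp only [taylor_within_apply, Finset.sum_range_succ, Finset.sum_range_zero, hcoeff]
    norm_num [Nat.factorial, descPochhammer_succ_eval]
    ring
  rw [← htaylor, hrem, iteratedDeriv_one_sub_rpow_add_one_add_rpow c 6
    (hsmall ξ (by rw [uIcc_of_le hb₀.le]; exact Ioo_subset_Icc_self hξ))]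
  norm_num [Nat.factorial]

theorem abs_one_sub_rpow_add_one_add_rpow_sub_taylor_le (hc : c ≤ 6) {b : ℝ} (hb₀ : 0 < b)
    (hb : b ≤ 1 / 2) :
    |(1 - b) ^ c + (1 + b) ^ c -
        (2 + (descPochhammer ℝ 2).eval c * b ^ 2 + (descPochhammer ℝ 4).eval c / 12 * b ^ 4)| ≤
      |(descPochhammer ℝ 6).eval c| * (2 ^ (6 - c) + 1) / 720 * b ^ 6 := by
  obtain ⟨ξ, ⟨hξ₀, hξb⟩, heq⟩ :=
    exists_one_sub_rpow_add_one_add_rpow_eq_taylor c hb₀ (by linarith)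
  have hleft : (1 - ξ) ^ (c - 6) ≤ (2 : ℝ) ^ (6 - c) :=
    calc (1 - ξ) ^ (c - 6) ≤ (1 / 2 : ℝ) ^ (c - 6) :=
          rpow_le_rpow_of_nonpos (by norm_num) (by linarith) (by linarith)
      _ = 2 ^ (6 - c) := by rw [one_div, inv_rpow zero_le_two, ← rpow_neg zero_le_two, neg_sub]
  have hright : (1 + ξ) ^ (c - 6) ≤ 1 := rpow_le_one_of_one_le_of_nonpos (by linarith) (by linarith)
  have hpos : 0 ≤ (1 - ξ) ^ (c - 6) + (1 + ξ) ^ (c - 6) := by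
    have := rpow_nonneg (show (0 : ℝ) ≤ 1 - ξ by linarith) (c - 6)
    have := rpow_nonneg (show (0 : ℝ) ≤ 1 + ξ by linarith) (c - 6)
    linarith
  rw [heq, abs_div, abs_mul, abs_mul, abs_of_nonneg hpos, abs_of_pos (by positivity : 0 < b ^ 6),
    abs_of_pos (by norm_num : (0 : ℝ) < 720)]
  calc _ ≤ |(descPochhammer ℝ 6).eval c| * (2 ^ (6 - c) + 1) * b ^ 6 / 720 := by
        gcongr
    _ = _ := by ring

theorem abs_second_difference_rpow_sub_le (hc : c ≤ 6) {K : ℝ} (hK : 2 ≤ K) :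
    |(K - 1) ^ c - 2 * K ^ c + (K + 1) ^ c - (descPochhammer ℝ 2).eval c * K ^ (c - 2) -
        (descPochhammer ℝ 4).eval c / 12 * K ^ (c - 4)| ≤
      |(descPochhammer ℝ 6).eval c| * (2 ^ (6 - c) + 1) / 720 * K ^ (c - 6) := by
  have hK₀ : 0 < K := by linarith
  have hinv : K⁻¹ ≤ 1 / 2 := by rw [inv_eq_one_div]; gcongr
  have hscale : ∀ n : ℕ, K ^ (c - n) = K ^ c * K⁻¹ ^ n := fun n => by
    rw [rpow_sub_natCast hK₀.ne', div_eq_mul_inv, inv_pow]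
  have hsub : (K - 1) ^ c = K ^ c * (1 - K⁻¹) ^ c := by
    rw [← mul_rpow hK₀.le (by linarith), mul_sub, mul_one, mul_inv_cancel₀ hK₀.ne']
  have hadd : (K + 1) ^ c = K ^ c * (1 + K⁻¹) ^ c := by
    rw [← mul_rpow hK₀.le (by positivity), mul_add, mul_one, mul_inv_cancel₀ hK₀.ne']
  have := abs_one_sub_rpow_add_one_add_rpow_sub_taylor_le c hc (inv_pos.mpr hK₀) hinv
  have h₂ := hscale 2
  have h₄ := hscale 4
  have h₆ := hscale 6
  push_cast at h₂ h₄ h₆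
  rw [hsub, hadd, h₂, h₄, h₆]
  calc _ = K ^ c * |(1 - K⁻¹) ^ c + (1 + K⁻¹) ^ c - (2 + (descPochhammer ℝ 2).eval c * K⁻¹ ^ 2 +
          (descPochhammer ℝ 4).eval c / 12 * K⁻¹ ^ 4)| := by
        conv_rhs => rw [← abs_of_pos (rpow_pos_of_pos hK₀ c), ← abs_mul]
        congr 1
        ring
    _ ≤ K ^ c * (|(descPochhammer ℝ 6).eval c| * (2 ^ (6 - c) + 1) / 720 * K⁻¹ ^ 6) := by
        gcongr
    _ = _ := by ring

end

theorem stmt3 (α : ℝ) (hα0 : 0 < α) (hα1 : α < 1) :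
    ∃ C > (0:ℝ), ∀ k : ℕ, 2 ≤ k →
      |(((k : ℝ) - 1) ^ (1 - α) - 2 * (k : ℝ) ^ (1 - α) + ((k : ℝ) + 1) ^ (1 - α)) /
            Real.Gamma (2 - α) -
          1 / (Real.Gamma (-α) * (k : ℝ) ^ (1 + α)) -
          1 / (12 * Real.Gamma (-2 - α) * (k : ℝ) ^ (3 + α))| ≤
        C / (k : ℝ) ^ (5 + α) := by
  have hs : ∀ k : ℕ, 1 - α ≠ k := fun k h => by
    have h₀ : (0 : ℝ) < k := by linarith
    have h₁ : (k : ℝ) < 1 := by linarith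
    norm_cast at h₀ h₁
    omega
  have hΓ : 0 < Gamma (1 - α + 1) := Gamma_pos_of_pos (by linarith)
  have hP₆ := descPochhammer_eval_ne_zero (n := 6) fun k _ => hs k
  set M := |(descPochhammer ℝ 6).eval (1 - α)| * (2 ^ (6 - (1 - α)) + 1) / 720
  refine ⟨M / Gamma (1 - α + 1), by positivity, fun k hk => ?_⟩
  have hK : (2 : ℝ) ≤ k := by exact_mod_cast hk
  rw [show (2 : ℝ) - α = 1 - α + 1 by ring, mul_assoc 12, ← one_div_mul_one_div 12,
    one_div_Gamma_mul_rpow_eq (t := -α) (p := 1 + α) (n := 2) (fun k _ => hs k) (by positivity)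
      (by push_cast; ring) (by push_cast; ring),
    one_div_Gamma_mul_rpow_eq (t := -2 - α) (p := 3 + α) (n := 4) (fun k _ => hs k) (by positivity)
      (by push_cast; ring) (by push_cast; ring)]
  push_cast
  calc _ = |((k : ℝ) - 1) ^ (1 - α) - 2 * (k : ℝ) ^ (1 - α) + ((k : ℝ) + 1) ^ (1 - α) -
          (descPochhammer ℝ 2).eval (1 - α) * (k : ℝ) ^ (1 - α - 2) -
          (descPochhammer ℝ 4).eval (1 - α) / 12 * (k : ℝ) ^ (1 - α - 4)| /
            Gamma (1 - α + 1) := by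
        conv_rhs => rw [← abs_of_pos hΓ, ← abs_div]
        congr 1
        ring
    _ ≤ M * (k : ℝ) ^ (1 - α - 6) / Gamma (1 - α + 1) := by
        gcongr
        exact abs_second_difference_rpow_sub_le (1 - α) (by linarith) hK
    _ = M / Gamma (1 - α + 1) / (k : ℝ) ^ (5 + α) := by
        rw [show 1 - α - 6 = -(5 + α) by ring, rpow_neg (by positivity)]
        ring
end

section
/- Let 0 < α < 1. There exists a constant C > 0 such that for every integer n ≥ 2, |((n−1)^{1−α} − n^{1−α})/Γ(2−α) + 1/(Γ(1−α) n^{α}) − 1/(2 Γ(−α) n^{1+α}) + 1/(6 Γ(−1−α) n^{2+α})| ≤ C / n^{3+α}. -/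
open Finset

/-!
Write `b = 1 - α` and `x = 1 / n`. Then `(n - 1) ^ b = n ^ b (1 - x) ^ b`, and the Gamma recurrence
`Γ(s + 1) = s Γ(s)` turns the three correction terms into `n ^ b / Γ(2 - α)` times the degree-3
binomial Taylor polynomial of `(1 - x) ^ b`. The whole expression is therefore
`n ^ b / Γ(2 - α)` times a Taylor remainder, which is `O(x ^ 4)` uniformly on `[0, 1/2]`.
-/

open Nat in
theorem descPochhammer_eval_div_factorial (a : ℝ) (k : ℕ) :
    (descPochhammer ℝ k).eval a / k ! = genBinom a k := by
  induction k with
  | zero => simp [genBinom]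
  | succ k ih =>
    rw [genBinom, ← ih, descPochhammer_succ_eval, Nat.factorial_succ, Nat.cast_mul]
    field_simp
    push_cast
    ring

theorem iteratedDeriv_one_sub_rpow (b t : ℝ) (k : ℕ) :
    iteratedDeriv k (fun t : ℝ => (1 - t) ^ b) t =
      (-1) ^ k * (descPochhammer ℝ k).eval b * (1 - t) ^ (b - k) := by
  rw [iteratedDeriv_comp_const_sub k (fun u : ℝ => u ^ b), iteratedDeriv_eq_iterate]
  simp only [Real.iter_deriv_rpow_const, smul_eq_mul, mul_assoc]

theorem contDiffAt_one_sub_rpow_s4 (b : ℝ) {t : ℝ} (ht : t < 1) {n : WithTop ℕ∞} :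
    ContDiffAt ℝ n (fun t : ℝ => (1 - t) ^ b) t :=
  (contDiffAt_const.sub contDiffAt_id).rpow_const_of_ne (sub_ne_zero.2 ht.ne')

theorem taylorWithinEval_one_sub_rpow (b : ℝ) (n : ℕ) {s : Set ℝ} (hs : UniqueDiffOn ℝ s)
    (hs0 : 0 ∈ s) (x : ℝ) :
    taylorWithinEval (fun t : ℝ => (1 - t) ^ b) n s 0 x =
      ∑ k ∈ range (n + 1), (-1) ^ k * genBinom b k * x ^ k := by
  rw [taylor_within_apply]
  refine sum_congr rfl fun k _ => ?_
  rw [iteratedDerivWithin_eq_iteratedDeriv hs (contDiffAt_one_sub_rpow_s4 b zero_lt_one) hs0,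
    iteratedDeriv_one_sub_rpow, ← descPochhammer_eval_div_factorial]
  simp only [sub_zero, Real.one_rpow, smul_eq_mul]
  ring

theorem exists_abs_one_sub_rpow_sub_binomial_le (b : ℝ) (n : ℕ) {r : ℝ} (hr0 : 0 < r)
    (hr1 : r < 1) :
    ∃ C > 0, ∀ x ∈ Set.Icc 0 r,
      |(1 - x) ^ b - ∑ k ∈ range (n + 1), (-1) ^ k * genBinom b k * x ^ k| ≤ C * x ^ (n + 1) := by
  have hsmooth : ContDiffOn ℝ (n + 1) (fun t : ℝ => (1 - t) ^ b) (Set.Icc 0 r) :=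
    fun t ht => (contDiffAt_one_sub_rpow_s4 b (ht.2.trans_lt hr1)).contDiffWithinAt
  obtain ⟨C, hC⟩ := exists_taylor_mean_remainder_bound hr0.le hsmooth
  refine ⟨max C 1, by positivity, fun x hx => ?_⟩
  have := hC x hx
  rw [taylorWithinEval_one_sub_rpow b n (uniqueDiffOn_Icc hr0) (Set.left_mem_Icc.2 hr0.le),
    sub_zero, Real.norm_eq_abs] at this
  exact this.trans (mul_le_mul_of_nonneg_right (le_max_left _ _) (pow_nonneg hx.1 _))

open Real in
theorem L1_weight_expansion_eq_mul_binomial_remainder {α : ℝ} (hα0 : 0 < α) (hα1 : α < 1)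
    {N : ℝ} (hN : 1 ≤ N) :
    ((N - 1) ^ (1 - α) - N ^ (1 - α)) / Gamma (2 - α) + 1 / (Gamma (1 - α) * N ^ α) -
        1 / (2 * Gamma (-α) * N ^ (1 + α)) + 1 / (6 * Gamma (-1 - α) * N ^ (2 + α)) =
      N ^ (1 - α) / Gamma (2 - α) *
        ((1 - N⁻¹) ^ (1 - α) - ∑ k ∈ range 4, (-1) ^ k * genBinom (1 - α) k * N⁻¹ ^ k) := by
  have hN0 : 0 < N := one_pos.trans_le hN
  have hΓ2 : Gamma (2 - α) = (1 - α) * Gamma (1 - α) := by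
    rw [show 2 - α = (1 - α) + 1 by ring, Gamma_add_one (by linarith)]
  have hΓ1 : Gamma (1 - α) = -α * Gamma (-α) := by
    rw [show 1 - α = -α + 1 by ring, Gamma_add_one (by linarith)]
  have hΓ0 : Gamma (-α) = (-1 - α) * Gamma (-1 - α) := by
    rw [show -α = (-1 - α) + 1 by ring, Gamma_add_one (by linarith)]
  have hΓ : Gamma (-1 - α) ≠ 0 := by
    intro h
    have : 0 < Gamma (2 - α) := Gamma_pos_of_pos (by linarith)
    simp [hΓ2, hΓ1, hΓ0, h] at this
  have hsplit : (N - 1) ^ (1 - α) = N ^ (1 - α) * (1 - N⁻¹) ^ (1 - α) := by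
    rw [← mul_rpow hN0.le (by simpa using inv_le_one_of_one_le₀ hN), mul_one_sub,
      mul_inv_cancel₀ hN0.ne']
  rw [hsplit, rpow_sub hN0, rpow_add hN0, rpow_add hN0, rpow_one, rpow_two, hΓ2, hΓ1, hΓ0]
  have h1 : 1 - α ≠ 0 := by linarith
  have h2 : -1 - α ≠ 0 := by linarith
  simp only [sum_range_succ, sum_range_zero, genBinom]
  push_cast
  field_simp
  ring

theorem stmt4 (α : ℝ) (hα0 : 0 < α) (hα1 : α < 1) :
    ∃ C > (0:ℝ), ∀ n : ℕ, 2 ≤ n →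
      |(((n : ℝ) - 1) ^ (1 - α) - (n : ℝ) ^ (1 - α)) / Real.Gamma (2 - α) +
          1 / (Real.Gamma (1 - α) * (n : ℝ) ^ α) -
          1 / (2 * Real.Gamma (-α) * (n : ℝ) ^ (1 + α)) +
          1 / (6 * Real.Gamma (-1 - α) * (n : ℝ) ^ (2 + α))| ≤
        C / (n : ℝ) ^ (3 + α) := by
  have hΓ : 0 < Real.Gamma (2 - α) := Real.Gamma_pos_of_pos (by linarith)
  obtain ⟨C, hC, hrem⟩ := exists_abs_one_sub_rpow_sub_binomial_le (1 - α) 3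
    (by norm_num : (0 : ℝ) < 1 / 2) (by norm_num)
  refine ⟨C / Real.Gamma (2 - α), div_pos hC hΓ, fun n hn => ?_⟩
  have hN : (2 : ℝ) ≤ n := by exact_mod_cast hn
  have hN0 : (0 : ℝ) < n := by linarith
  have hx : (n : ℝ)⁻¹ ∈ Set.Icc (0 : ℝ) (1 / 2) :=
    ⟨by positivity, by rw [one_div]; exact inv_anti₀ two_pos hN⟩
  have hscale : (n : ℝ) ^ (1 - α) * (n : ℝ)⁻¹ ^ 4 = 1 / (n : ℝ) ^ (3 + α) := by
    rw [Real.rpow_sub hN0, Real.rpow_add hN0, Real.rpow_one, show (3 : ℝ) = (3 : ℕ) by norm_num,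
      Real.rpow_natCast]
    field_simp
  rw [L1_weight_expansion_eq_mul_binomial_remainder hα0 hα1 (by linarith), abs_mul,
    abs_of_pos (by positivity)]
  calc (n : ℝ) ^ (1 - α) / Real.Gamma (2 - α) * |_|
      ≤ (n : ℝ) ^ (1 - α) / Real.Gamma (2 - α) * (C * (n : ℝ)⁻¹ ^ 4) :=
        mul_le_mul_of_nonneg_left (hrem _ hx) (by positivity)
    _ = C / Real.Gamma (2 - α) / (n : ℝ) ^ (3 + α) := by
        rw [div_eq_mul_one_div (C / _), ← hscale]
        ring
end
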